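/- Let K be a Lévy kernel on ℝⁿ with K(y) > 0 for almost every y, let Ω ⊂ ℝⁿ be a bounded open set contained in a ball of radius R centered at the origin, and set C = (∫_{ℝⁿ∖B_{2R}} K(y) dy)^{−1}. Let f ∈ L^∞(Ω), g ∈ L^∞(ℝⁿ∖Ω), and let u be an energy weak solution of Lu = f in Ω with u = g in ℝⁿ∖Ω. Then |u| ≤ ‖g‖_{L^∞(ℝⁿ∖Ω)} + C‖f‖_{L^∞(Ω)} almost everywhere in Ω. -/

import Mathlib

open MeasureTheory Metric Set
open scoped ENNReal

noncomputable section

abbrev Ev (n : ℕ) := EuclideanSpace ℝ (Fin n)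

/-- A Lévy kernel on `ℝⁿ`. -/
def IsLevyKernel {n : ℕ} (K : Ev n → ℝ) : Prop :=
  Measurable K ∧ (∀ y, 0 ≤ K y) ∧ (∀ y, K (-y) = K y) ∧
    Integrable (fun y => min (‖y‖ ^ 2) 1 * K y)

/-- The region `(ℝⁿ×ℝⁿ) ∖ (Ωᶜ×Ωᶜ)`. -/
def crossRegion {n : ℕ} (Ω : Set (Ev n)) : Set (Ev n × Ev n) := {p | p.1 ∈ Ω ∨ p.2 ∈ Ω}

/-- The energy `E_Ω(φ) = ∬_{(ℝⁿ×ℝⁿ)∖(Ωᶜ×Ωᶜ)} (φ(x)-φ(z))² K(x-z) dx dz`, in `[0,∞]`. -/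
def energyE {n : ℕ} (K : Ev n → ℝ) (Ω : Set (Ev n)) (φ : Ev n → ℝ) : ℝ≥0∞ :=
  ∫⁻ p in crossRegion Ω, ENNReal.ofReal ((φ p.1 - φ p.2) ^ 2 * K (p.1 - p.2))

/-- A test function for `(Ω, K)`: in `L²(ℝⁿ)`, vanishing a.e. outside `Ω`, finite energy. -/
def IsTestFn {n : ℕ} (K : Ev n → ℝ) (Ω : Set (Ev n)) (φ : Ev n → ℝ) : Prop :=
  Measurable φ ∧ MemLp φ 2 volume ∧ (∀ᵐ x : Ev n, x ∉ Ω → φ x = 0) ∧ energyE K Ω φ < ⊤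

/-- An energy weak solution of `Lu = f` in `Ω` with `u = g` in `ℝⁿ∖Ω`. -/
def IsEnergyWeakSol {n : ℕ} (K : Ev n → ℝ) (Ω : Set (Ev n)) (f g : Ev n → ℝ)
    (u : Ev n → ℝ) : Prop :=
  Measurable u ∧ MemLp u 2 (volume.restrict Ω) ∧ (∀ᵐ x : Ev n, x ∉ Ω → u x = g x) ∧
    energyE K Ω u < ⊤ ∧
    ∀ φ : Ev n → ℝ, IsTestFn K Ω φ →
      (1/2 : ℝ) * ∫ p in crossRegion Ω, (u p.1 - u p.2) * (φ p.1 - φ p.2) * K (p.1 - p.2)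
        = ∫ x in Ω, f x * φ x

/-!
Test the weak formulation with `w = (u - M)₊ 𝟙_Ω`, where `M = ‖g‖_∞ + c` and `c > C ‖f‖_∞`.
Since `u ≤ M` a.e. off `Ω`, `w` is a.e. a 1-Lipschitz function of `u`, hence a test function, and
the right-hand side is at most `‖f‖_∞ ∫ w`. On the left the integrand is nonnegative because
truncation is monotone. If `x ∈ Ω` and `|x - z| ≥ 2R`, then `z ∉ Ω` because `Ω ⊆ B_R`, so
`u(x) - u(z) ≥ c` wherever `w(x) > 0`; these pairs and their mirror images contribute at least
`2 c (∫ w) ∫_{ℝⁿ∖B_{2R}} K`. Hence `(c / C - ‖f‖_∞) ∫ w ≤ 0`, so `w = 0` and `u ≤ ‖g‖_∞ + c`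
in `Ω`. Letting `c ↓ C ‖f‖_∞` and applying the same bound to `-u` gives the claim.
-/

lemma mul_max_sub_le_mul_max_sub {s t a c : ℝ} (ht : t ≤ a) :
    c * max (s - (a + c)) 0 ≤ (s - t) * max (s - (a + c)) 0 := by
  rcases le_total s (a + c) with hs | hs
  · simp [max_eq_right (sub_nonpos.2 hs)]
  · exact mul_le_mul_of_nonneg_right (by linarith) (le_max_right _ _)

section Measure

variable {α : Type*} [MeasurableSpace α] {μ : Measure α}

lemma ae_abs_le_toReal_eLpNorm_top {f : α → ℝ} (hf : MemLp f ⊤ μ) :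
    ∀ᵐ x ∂μ, |f x| ≤ (eLpNorm f ⊤ μ).toReal := by
  filter_upwards [ae_le_eLpNormEssSup (f := f) (μ := μ)] with x hx
  rw [← eLpNorm_exponent_top] at hx
  simpa [Real.norm_eq_abs] using ENNReal.toReal_mono hf.2.ne hx

lemma integral_mul_le_toReal_eLpNorm_top_mul {f w : α → ℝ} (hf : MemLp f ⊤ μ)
    (hw : Integrable w μ) (hw0 : 0 ≤ᵐ[μ] w) :
    ∫ x, f x * w x ∂μ ≤ (eLpNorm f ⊤ μ).toReal * ∫ x, w x ∂μ := by
  have hfb := ae_abs_le_toReal_eLpNorm_top hf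
  rw [← integral_const_mul]
  refine integral_mono_ae (hw.bdd_mul hf.1 (by simpa [Real.norm_eq_abs] using hfb))
    (hw.const_mul _) ?_
  filter_upwards [hfb, hw0] with x hfx hwx
  exact mul_le_mul_of_nonneg_right ((le_abs_self _).trans hfx) hwx

lemma ae_le_of_forall_lt_ae_le {f : α → ℝ} {b : ℝ} (h : ∀ c, b < c → ∀ᵐ x ∂μ, f x ≤ c) :
    ∀ᵐ x ∂μ, f x ≤ b := by
  have hseq : ∀ᵐ x ∂μ, ∀ k : ℕ, f x ≤ b + 1 / (k + 1) :=
    ae_all_iff.2 fun k => h _ (lt_add_of_pos_right b Nat.one_div_pos_of_nat)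
  filter_upwards [hseq] with x hx
  refine le_of_forall_pos_lt_add fun δ hδ => ?_
  obtain ⟨k, hk⟩ := exists_nat_one_div_lt hδ
  linarith [hx k]

lemma ae_fst_and_snd [SFinite μ] {P : α → Prop} (h : ∀ᵐ x ∂μ, P x) :
    ∀ᵐ p ∂μ.prod μ, P p.1 ∧ P p.2 :=
  (Measure.quasiMeasurePreserving_fst.ae h).and (Measure.quasiMeasurePreserving_snd.ae h)

end Measure

section Translation

variable {G : Type*} [MeasurableSpace G] [AddGroup G] [MeasurableAdd₂ G] [MeasurableNeg G]
  {μ : Measure G} [SFinite μ] [μ.IsAddRightInvariant] {w k : G → ℝ}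

lemma MeasureTheory.Integrable.mul_comp_sub_fst (hw : Integrable w μ) (hk : Integrable k μ) :
    Integrable (fun p : G × G => w p.1 * k (p.2 - p.1)) (μ.prod μ) :=
  (measurePreserving_prod_sub μ μ).integrable_comp_of_integrable (hw.mul_prod hk)

lemma integral_mul_comp_sub_fst (hw : Integrable w μ) (hk : Integrable k μ) :
    ∫ p, w p.1 * k (p.2 - p.1) ∂μ.prod μ = (∫ x, w x ∂μ) * ∫ y, k y ∂μ := by
  rw [integral_prod _ (hw.mul_comp_sub_fst hk), ← integral_mul_const]
  simp_rw [integral_const_mul, integral_sub_right_eq_self]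

end Translation

section Truncation

variable {α : Type*} {s : Set α} {u : α → ℝ} {M : ℝ} {x : α}

def excessAbove (s : Set α) (u : α → ℝ) (M : ℝ) : α → ℝ :=
  s.indicator fun x => max (u x - M) 0

lemma excessAbove_nonneg : 0 ≤ excessAbove s u M x :=
  indicator_nonneg (fun _ _ => le_max_right _ _) x

lemma excessAbove_of_mem (hx : x ∈ s) : excessAbove s u M x = max (u x - M) 0 :=
  indicator_of_mem hx _

lemma excessAbove_of_notMem (hx : x ∉ s) : excessAbove s u M x = 0 :=
  indicator_of_notMem hx _

variable [MeasurableSpace α] {μ : Measure α}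

lemma excessAbove_ae_eq (h : ∀ᵐ x ∂μ, x ∉ s → u x ≤ M) :
    excessAbove s u M =ᵐ[μ] fun x => max (u x - M) 0 := by
  filter_upwards [h] with x hx
  by_cases hxs : x ∈ s
  · exact excessAbove_of_mem hxs
  · rw [excessAbove_of_notMem hxs, max_eq_right (sub_nonpos.2 (hx hxs))]

lemma integrable_excessAbove (hs : MeasurableSet s) (hsμ : μ s ≠ ⊤)
    (hu : MemLp u 2 (μ.restrict s)) : Integrable (excessAbove s u M) μ := by
  have := isFiniteMeasure_restrict.2 hsμ
  exact (integrable_indicator_iff hs).2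
    ((hu.integrable one_le_two).sub (integrable_const M)).pos_part

end Truncation

section LevyKernel

variable {n : ℕ} {K : Ev n → ℝ}

lemma IsLevyKernel.integrableOn_compl_ball (hK : IsLevyKernel K) {r : ℝ} (hr : 0 < r) :
    IntegrableOn K (ball 0 r)ᶜ := by
  obtain ⟨hKm, hK0, -, hKint⟩ := hK
  have hc : 0 < min (r ^ 2) 1 := by positivity
  refine ((hKint.integrableOn (s := (ball 0 r)ᶜ)).const_mul (min (r ^ 2) 1)⁻¹).mono'
    hKm.aestronglyMeasurable ((ae_restrict_iff' measurableSet_ball.compl).2 (ae_of_all _ ?_))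
  intro y hy
  have hry : r ≤ ‖y‖ := by simpa using hy
  rw [Real.norm_eq_abs, abs_of_nonneg (hK0 y), le_inv_mul_iff₀ hc]
  gcongr
  exact hK0 y

lemma IsLevyKernel.integral_compl_ball_pos (hn : 1 ≤ n) (hK : IsLevyKernel K)
    (hKpos : ∀ᵐ y : Ev n, 0 < K y) {r : ℝ} (hr : 0 < r) :
    0 < ∫ y in (ball 0 r)ᶜ, K y := by
  have : Nonempty (Fin n) := ⟨⟨0, hn⟩⟩
  have hcompl : volume (ball (0 : Ev n) r)ᶜ = ⊤ := by
    rw [measure_compl measurableSet_ball measure_ball_lt_top.ne,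
      measure_univ_of_isAddLeftInvariant]
    exact ENNReal.top_sub measure_ball_lt_top.ne
  rw [setIntegral_pos_iff_support_of_nonneg_ae (ae_of_all _ hK.2.1)
    (hK.integrableOn_compl_ball hr)]
  calc (0 : ℝ≥0∞) < volume ((ball (0 : Ev n) r)ᶜ ∩ {y | 0 < K y}) := by
        rw [measure_inter_conull (t := {y | 0 < K y}) (ae_iff.1 hKpos), hcompl]
        exact ENNReal.zero_lt_top
    _ ≤ volume (Function.support K ∩ (ball 0 r)ᶜ) :=
        measure_mono fun y ⟨hy, hKy⟩ => ⟨hKy.ne', hy⟩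

section Energy

variable {Ω : Set (Ev n)}

lemma measurableSet_crossRegion (hΩ : MeasurableSet Ω) : MeasurableSet (crossRegion Ω) :=
  (measurable_fst hΩ).union (measurable_snd hΩ)

lemma energyE_congr_ae {φ ψ : Ev n → ℝ} (h : φ =ᵐ[volume] ψ) :
    energyE K Ω φ = energyE K Ω ψ := by
  refine lintegral_congr_ae (ae_restrict_of_ae ?_)
  filter_upwards [ae_fst_and_snd h] with p hp
  rw [hp.1, hp.2]

lemma energyE_comp_le (hK0 : ∀ y, 0 ≤ K y) {φ : ℝ → ℝ} (hφ : LipschitzWith 1 φ)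
    (u : Ev n → ℝ) : energyE K Ω (φ ∘ u) ≤ energyE K Ω u := by
  refine lintegral_mono fun p => ENNReal.ofReal_le_ofReal ?_
  refine mul_le_mul_of_nonneg_right ?_ (hK0 _)
  rw [← sq_abs, ← sq_abs (u p.1 - u p.2)]
  have := hφ.dist_le_mul (u p.1) (u p.2)
  simp only [Real.dist_eq, NNReal.coe_one, one_mul] at this
  exact pow_le_pow_left₀ (abs_nonneg _) this 2

lemma integrable_energyDensity (hKm : Measurable K) (hK0 : ∀ y, 0 ≤ K y) {φ : Ev n → ℝ}
    (hφ : Measurable φ) (hE : energyE K Ω φ < ⊤) :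
    Integrable (fun p => (φ p.1 - φ p.2) ^ 2 * K (p.1 - p.2))
      (volume.restrict (crossRegion Ω)) := by
  refine (lintegral_ofReal_ne_top_iff_integrable ?_
    (ae_of_all _ fun p => mul_nonneg (sq_nonneg _) (hK0 _))).1 hE.ne
  fun_prop

lemma integrable_energyForm (hKm : Measurable K) (hK0 : ∀ y, 0 ≤ K y) {u φ : Ev n → ℝ}
    (hu : Measurable u) (hφ : Measurable φ) (hEu : energyE K Ω u < ⊤)
    (hEφ : energyE K Ω φ < ⊤) :
    Integrable (fun p => (u p.1 - u p.2) * (φ p.1 - φ p.2) * K (p.1 - p.2))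
      (volume.restrict (crossRegion Ω)) := by
  refine (((integrable_energyDensity hKm hK0 hu hEu).add
    (integrable_energyDensity hKm hK0 hφ hEφ)).div_const 2).mono' (by fun_prop)
    (ae_of_all _ fun p => ?_)
  rw [Real.norm_eq_abs, abs_mul, abs_of_nonneg (hK0 _), abs_mul]
  have := two_mul_le_add_sq |u p.1 - u p.2| |φ p.1 - φ p.2|
  rw [sq_abs, sq_abs] at this
  have := hK0 (p.1 - p.2)
  simp only [Pi.add_apply]
  nlinarith

lemma isTestFn_excessAbove (hK0 : ∀ y, 0 ≤ K y) (hΩ : MeasurableSet Ω) (hΩfin : volume Ω ≠ ⊤)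
    {u : Ev n → ℝ} {M : ℝ} (hum : Measurable u) (huL2 : MemLp u 2 (volume.restrict Ω))
    (huE : energyE K Ω u < ⊤) (h : ∀ᵐ x, x ∉ Ω → u x ≤ M) :
    IsTestFn K Ω (excessAbove Ω u M) := by
  have := isFiniteMeasure_restrict.2 hΩfin
  refine ⟨((hum.sub_const M).max measurable_const).indicator hΩ,
    (memLp_indicator_iff_restrict hΩ).2 (huL2.sub (memLp_const M)).pos_part,
    ae_of_all _ fun x => excessAbove_of_notMem, ?_⟩
  rw [energyE_congr_ae (excessAbove_ae_eq h)]
  have hlip : LipschitzWith 1 fun t : ℝ => max (t - M) 0 := .of_dist_le_mul fun s t => by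
    simpa [Real.dist_eq] using abs_max_sub_max_le_abs (s - M) (t - M) 0
  exact (energyE_comp_le hK0 hlip u).trans_lt huE

end Energy

section LowerBound

variable {Ω : Set (Ev n)} {u : Ev n → ℝ} {R a c : ℝ} {x z : Ev n}

lemma excessAbove_jump_ge_of_mem_of_notMem (hK0 : ∀ y, 0 ≤ K y) (hKsym : ∀ y, K (-y) = K y)
    (hc : 0 ≤ c) (hx : x ∈ Ω) (hz : z ∉ Ω) (huz : u z ≤ a) :
    c * (excessAbove Ω u (a + c) x * (ball (0 : Ev n) (2 * R))ᶜ.indicator K (z - x)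
        + excessAbove Ω u (a + c) z * (ball (0 : Ev n) (2 * R))ᶜ.indicator K (x - z))
      ≤ (u x - u z) * (excessAbove Ω u (a + c) x - excessAbove Ω u (a + c) z) * K (x - z) := by
  rw [excessAbove_of_notMem hz, zero_mul, add_zero, sub_zero, excessAbove_of_mem hx,
    ← mul_assoc, show K (x - z) = K (z - x) by rw [← neg_sub, hKsym]]
  calc _ ≤ c * max (u x - (a + c)) 0 * K (z - x) :=
        mul_le_mul_of_nonneg_left (indicator_le_self' (f := K) (fun _ _ => hK0 _) _)
          (mul_nonneg hc (le_max_right _ _))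
    _ ≤ _ := mul_le_mul_of_nonneg_right (mul_max_sub_le_mul_max_sub huz) (hK0 _)

lemma excessAbove_jump_ge (hK0 : ∀ y, 0 ≤ K y) (hKsym : ∀ y, K (-y) = K y)
    (hΩR : Ω ⊆ ball 0 R) (hc : 0 ≤ c)
    (hxz : x ∈ Ω ∨ z ∈ Ω) (hux : x ∉ Ω → u x ≤ a) (huz : z ∉ Ω → u z ≤ a) :
    c * (excessAbove Ω u (a + c) x * (ball (0 : Ev n) (2 * R))ᶜ.indicator K (z - x)
        + excessAbove Ω u (a + c) z * (ball (0 : Ev n) (2 * R))ᶜ.indicator K (x - z))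
      ≤ (u x - u z) * (excessAbove Ω u (a + c) x - excessAbove Ω u (a + c) z) * K (x - z) := by
  by_cases hx : x ∈ Ω <;> by_cases hz : z ∈ Ω
  · have hnear : ∀ {y y'}, y ∈ Ω → y' ∈ Ω → y - y' ∉ (ball (0 : Ev n) (2 * R))ᶜ := by
      intro y y' hy hy'
      have := mem_ball_zero_iff.1 (hΩR hy)
      have := mem_ball_zero_iff.1 (hΩR hy')
      simpa using (norm_sub_le y y').trans_lt (by linarith)
    rw [indicator_of_notMem (hnear hz hx), indicator_of_notMem (hnear hx hz)]
    simp only [mul_zero, add_zero]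
    refine mul_nonneg ?_ (hK0 _)
    rw [excessAbove_of_mem hx, excessAbove_of_mem hz, mul_comm]
    have hmono : Monovary (fun t => max (t - (a + c)) 0) id :=
      monovary_id_iff.2 fun s t hst => max_le_max_right 0 (sub_le_sub_right hst _)
    exact hmono.sub_mul_sub_nonneg (u z) (u x)
  · exact excessAbove_jump_ge_of_mem_of_notMem hK0 hKsym hc hx hz (huz hz)
  · have := excessAbove_jump_ge_of_mem_of_notMem (R := R) hK0 hKsym hc hz hx (hux hx)
    rw [add_comm, show K (z - x) = K (x - z) by rw [← neg_sub, hKsym]] at this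
    exact this.trans_eq (by ring)
  · exact absurd hxz (by tauto)

lemma integral_excessAbove_jump_ge (hK : IsLevyKernel K) (hR : 0 < R) (hΩ : MeasurableSet Ω)
    (hΩR : Ω ⊆ ball 0 R) (hc : 0 ≤ c) (ha : ∀ᵐ x, x ∉ Ω → u x ≤ a)
    (hw : Integrable (excessAbove Ω u (a + c)))
    (hF : Integrable (fun p => (u p.1 - u p.2) *
      (excessAbove Ω u (a + c) p.1 - excessAbove Ω u (a + c) p.2) * K (p.1 - p.2))
      (volume.restrict (crossRegion Ω))) :
    2 * c * ((∫ x, excessAbove Ω u (a + c) x) * ∫ y in (ball (0 : Ev n) (2 * R))ᶜ, K y)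
      ≤ ∫ p in crossRegion Ω, (u p.1 - u p.2) *
          (excessAbove Ω u (a + c) p.1 - excessAbove Ω u (a + c) p.2) * K (p.1 - p.2) := by
  set w := excessAbove Ω u (a + c)
  set k := (ball (0 : Ev n) (2 * R))ᶜ.indicator K
  have hk : Integrable k := (integrable_indicator_iff measurableSet_ball.compl).2
    (hK.integrableOn_compl_ball (by positivity))
  have hG : Integrable (fun p : Ev n × Ev n => w p.1 * k (p.2 - p.1)) := hw.mul_comp_sub_fst hk
  have hG' : Integrable (fun p : Ev n × Ev n => w p.2 * k (p.1 - p.2)) := hG.swap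
  have hprod : ∫ p : Ev n × Ev n, w p.1 * k (p.2 - p.1) = (∫ x, w x) * ∫ y, k y :=
    integral_mul_comp_sub_fst hw hk
  have hswap : ∫ p : Ev n × Ev n, w p.2 * k (p.1 - p.2) =
      ∫ p : Ev n × Ev n, w p.1 * k (p.2 - p.1) :=
    integral_prod_swap (fun p : Ev n × Ev n => w p.1 * k (p.2 - p.1))
  have hvanish : ∀ p ∉ crossRegion Ω,
      c * (w p.1 * k (p.2 - p.1) + w p.2 * k (p.1 - p.2)) = 0 := by
    rintro p hp
    simp only [crossRegion, mem_ofPred_eq, not_or] at hp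
    simp [w, excessAbove_of_notMem hp.1, excessAbove_of_notMem hp.2]
  calc 2 * c * ((∫ x, w x) * ∫ y in (ball (0 : Ev n) (2 * R))ᶜ, K y)
      = c * ((∫ p : Ev n × Ev n, w p.1 * k (p.2 - p.1))
          + ∫ p : Ev n × Ev n, w p.2 * k (p.1 - p.2)) := by
        rw [hswap, hprod, integral_indicator measurableSet_ball.compl]
        ring
    _ = ∫ p in crossRegion Ω, c * (w p.1 * k (p.2 - p.1) + w p.2 * k (p.1 - p.2)) := by
        rw [setIntegral_eq_integral_of_forall_compl_eq_zero hvanish, integral_const_mul,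
          integral_add hG hG']
    _ ≤ _ := by
        refine integral_mono_ae ((hG.add hG').const_mul c).integrableOn hF ?_
        refine (ae_restrict_iff' (measurableSet_crossRegion hΩ)).2 ?_
        filter_upwards [ae_fst_and_snd ha] with p hp hcross
        exact excessAbove_jump_ge hK.2.1 hK.2.2.1 hΩR hc hcross hp.1 hp.2

end LowerBound

section WeakSolution

variable {Ω : Set (Ev n)} {f g u : Ev n → ℝ}

lemma IsEnergyWeakSol.neg (hu : IsEnergyWeakSol K Ω f g u) :
    IsEnergyWeakSol K Ω (-f) (-g) (-u) := by
  obtain ⟨hum, huL2, hug, huE, huweak⟩ := hu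
  refine ⟨hum.neg, huL2.neg, ?_, ?_, fun φ hφ => ?_⟩
  · filter_upwards [hug] with x hx hxΩ
    simp [hx hxΩ]
  · have hE : energyE K Ω (-u) = energyE K Ω u := by
      unfold energyE
      congr! 3 with p
      simp only [Pi.neg_apply]
      ring
    rwa [hE]
  · have hneg : ∀ p : Ev n × Ev n, ((-u) p.1 - (-u) p.2) * (φ p.1 - φ p.2) * K (p.1 - p.2)
        = -((u p.1 - u p.2) * (φ p.1 - φ p.2) * K (p.1 - p.2)) := fun p => by
      simp only [Pi.neg_apply]
      ring
    rw [integral_congr_ae (ae_of_all _ hneg), integral_neg, mul_neg, huweak φ hφ]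
    simp only [Pi.neg_apply, neg_mul, integral_neg]

lemma IsEnergyWeakSol.ae_le_of_notMem (hΩ : MeasurableSet Ω) (hu : IsEnergyWeakSol K Ω f g u)
    (hg : MemLp g ⊤ (volume.restrict Ωᶜ)) :
    ∀ᵐ x, x ∉ Ω → u x ≤ (eLpNorm g ⊤ (volume.restrict Ωᶜ)).toReal := by
  obtain ⟨-, -, hug, -, -⟩ := hu
  have hgb := (ae_restrict_iff' hΩ.compl).1 (ae_abs_le_toReal_eLpNorm_top hg)
  filter_upwards [hgb, hug] with x hgx hux hxΩ
  rw [hux hxΩ]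
  exact (le_abs_self _).trans (hgx hxΩ)

theorem IsEnergyWeakSol.ae_le_add {R a c : ℝ} (hK : IsLevyKernel K) (hΩ : MeasurableSet Ω)
    (hR : 0 < R) (hΩR : Ω ⊆ ball 0 R) (hf : MemLp f ⊤ (volume.restrict Ω))
    (hu : IsEnergyWeakSol K Ω f g u) (ha : ∀ᵐ x, x ∉ Ω → u x ≤ a)
    (hc : (eLpNorm f ⊤ (volume.restrict Ω)).toReal < c * ∫ y in (ball (0 : Ev n) (2 * R))ᶜ, K y) :
    ∀ᵐ x ∂volume.restrict Ω, u x ≤ a + c := by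
  obtain ⟨hum, huL2, -, huE, huweak⟩ := hu
  have hK0 := hK.2.1
  have hΩfin : volume Ω ≠ ⊤ := ((measure_mono hΩR).trans_lt measure_ball_lt_top).ne
  set w := excessAbove Ω u (a + c)
  have hIK : 0 ≤ ∫ y in (ball (0 : Ev n) (2 * R))ᶜ, K y :=
    setIntegral_nonneg measurableSet_ball.compl fun y _ => hK0 y
  have hc0 : 0 ≤ c := (pos_of_mul_pos_left (ENNReal.toReal_nonneg.trans_lt hc) hIK).le
  have hwtest : IsTestFn K Ω w := isTestFn_excessAbove hK0 hΩ hΩfin hum huL2 huE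
    (ha.mono fun x hx hxΩ => (hx hxΩ).trans (by linarith))
  have hw : Integrable w := integrable_excessAbove hΩ hΩfin huL2
  have hS : 0 ≤ ∫ x, w x := integral_nonneg fun _ => excessAbove_nonneg
  have hupper := integral_mul_le_toReal_eLpNorm_top_mul hf hw.integrableOn
    (ae_of_all _ fun _ => excessAbove_nonneg)
  rw [setIntegral_eq_integral_of_forall_compl_eq_zero fun x hx => excessAbove_of_notMem hx,
    ← huweak w hwtest] at hupper
  have hlower := integral_excessAbove_jump_ge hK hR hΩ hΩR hc0 ha hw
    (integrable_energyForm hK.1 hK0 hum hwtest.1 huE hwtest.2.2.2)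
  have hw0 : w =ᵐ[volume] 0 :=
    (integral_eq_zero_iff_of_nonneg (fun _ => excessAbove_nonneg) hw).1 (by nlinarith)
  refine (ae_restrict_iff' hΩ).2 ?_
  filter_upwards [hw0] with x hx hxΩ
  have hmax : max (u x - (a + c)) 0 = 0 := (excessAbove_of_mem hxΩ).symm.trans hx
  linarith [le_max_left (u x - (a + c)) 0]

theorem IsEnergyWeakSol.ae_le (hn : 1 ≤ n) (hK : IsLevyKernel K) (hKpos : ∀ᵐ y : Ev n, 0 < K y)
    (hΩ : MeasurableSet Ω) {R : ℝ} (hR : 0 < R) (hΩR : Ω ⊆ ball 0 R)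
    (hf : MemLp f ⊤ (volume.restrict Ω)) (hg : MemLp g ⊤ (volume.restrict Ωᶜ))
    (hu : IsEnergyWeakSol K Ω f g u) :
    ∀ᵐ x ∂volume.restrict Ω, u x ≤ (eLpNorm g ⊤ (volume.restrict Ωᶜ)).toReal
      + (∫ y in (ball (0 : Ev n) (2 * R))ᶜ, K y)⁻¹ * (eLpNorm f ⊤ (volume.restrict Ω)).toReal := by
  have hC := hK.integral_compl_ball_pos hn hKpos (by positivity : 0 < 2 * R)
  refine ae_le_of_forall_lt_ae_le fun b hb => ?_
  simpa using hu.ae_le_add hK hΩ hR hΩR hf (hu.ae_le_of_notMem hΩ hg)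
    (c := b - (eLpNorm g ⊤ (volume.restrict Ωᶜ)).toReal)
    (by rw [← inv_mul_lt_iff₀' hC]; linarith)

end WeakSolution

end LevyKernel

theorem statement7_general {n : ℕ} (hn : 1 ≤ n) (K : Ev n → ℝ) (hK : IsLevyKernel K)
    (hKpos : ∀ᵐ y : Ev n, 0 < K y)
    (Ω : Set (Ev n)) (hΩo : IsOpen Ω) (R : ℝ) (hR : 0 < R) (hΩR : Ω ⊆ ball (0 : Ev n) R)
    (f g u : Ev n → ℝ) (hf : MemLp f ⊤ (volume.restrict Ω))
    (hg' : MemLp g ⊤ (volume.restrict Ωᶜ))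
    (hu : IsEnergyWeakSol K Ω f g u) :
    ∀ᵐ x : Ev n, x ∈ Ω →
      |u x| ≤ (eLpNorm g ⊤ (volume.restrict Ωᶜ)).toReal
        + (∫ y in (ball (0 : Ev n) (2 * R))ᶜ, K y)⁻¹ *
            (eLpNorm f ⊤ (volume.restrict Ω)).toReal := by
  have hΩ := hΩo.measurableSet
  have hneg := hu.neg.ae_le hn hK hKpos hΩ hR hΩR hf.neg hg'.neg
  rw [eLpNorm_neg, eLpNorm_neg] at hneg
  rw [← ae_restrict_iff' hΩ]
  filter_upwards [hu.ae_le hn hK hKpos hΩ hR hΩR hf hg', hneg] with x hle hge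
  exact abs_le.2 ⟨by simpa using neg_le_of_neg_le hge, hle⟩

/-- `L^∞` bound.  If `Ω ⊆ B_R` and `C = (∫_{ℝⁿ∖B_{2R}} K)⁻¹`, then every
energy weak solution of `Lu = f` in `Ω`, `u = g` outside, with `f ∈ L^∞(Ω)` and
`g ∈ L^∞(ℝⁿ∖Ω)`, satisfies `|u| ≤ ‖g‖_{L^∞(ℝⁿ∖Ω)} + C ‖f‖_{L^∞(Ω)}` a.e. in `Ω`. -/
theorem statement7 {n : ℕ} (hn : 1 ≤ n) (K : Ev n → ℝ) (hK : IsLevyKernel K)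
    (hKpos : ∀ᵐ y : Ev n, 0 < K y)
    (Ω : Set (Ev n)) (hΩo : IsOpen Ω) (R : ℝ) (hR : 0 < R) (hΩR : Ω ⊆ ball (0 : Ev n) R)
    (f g u : Ev n → ℝ) (hf : MemLp f ⊤ (volume.restrict Ω)) (hg : Measurable g)
    (hg' : MemLp g ⊤ (volume.restrict Ωᶜ))
    (hu : IsEnergyWeakSol K Ω f g u) :
    ∀ᵐ x : Ev n, x ∈ Ω →
      |u x| ≤ (eLpNorm g ⊤ (volume.restrict Ωᶜ)).toReal
        + (∫ y in (ball (0 : Ev n) (2 * R))ᶜ, K y)⁻¹ *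
            (eLpNorm f ⊤ (volume.restrict Ω)).toReal :=
  statement7_general hn K hK hKpos Ω hΩo R hR hΩR f g u hf hg' hu
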